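/- For all t > 0, r > 0 and θ ∈ ℝ, if dist(k_θ · (e^{−2t}·i), e^{−2t}·i) ≤ r, then sin²(θ) ≤ sinh²(r/2)/sinh²(2t). -/

import Mathlib

open UpperHalfPlane

/-- The rotation matrix `[[cos θ, sin θ], [−sin θ, cos θ]]` as an element of `SL(2, ℝ)`. -/
noncomputable def rotSL (θ : ℝ) : Matrix.SpecialLinearGroup (Fin 2) ℝ :=
  ⟨!![Real.cos θ, Real.sin θ; -Real.sin θ, Real.cos θ], by
    rw [Matrix.det_fin_two_of]
    nlinarith [Real.sin_sq_add_cos_sq θ]⟩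

/-- The point `e^{−2t}·i` of the hyperbolic upper half-plane. -/
noncomputable def ptI (t : ℝ) : UpperHalfPlane :=
  ⟨⟨0, Real.exp (-(2 * t))⟩, by simpa using Real.exp_pos (-(2 * t))⟩

/-!
The rotation `k_θ` fixes `i` and turns the tangent plane there by `2θ`, so `i`, `z`, `k_θ z` form an
isosceles triangle with legs `d(z, i)` and apex angle `2θ`, and the hyperbolic law of cosines gives
`sinh (d(k_θ z, z) / 2) = |sin θ| · sinh d(z, i)`. Concretely, with `c = cos θ`, `s = sin θ`,
`k_θ z - z = s (1 + z²) / (c - s z)` and `Im (k_θ z) = Im z / |c - s z|²`, so the factor `|c - s z|`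
cancels in `sinh (d(w, z) / 2) = |w - z| / (2 √(Im w Im z))`, while `|1 + z²| / (2 Im z)` is
`sinh d(z, i)`. For `z = e^{-2t} i` one has `d(z, i) = 2t`, and `sinh` is increasing.
-/

namespace UpperHalfPlane

theorem denom_mapGL_rotSL (θ : ℝ) (z : ℂ) :
    denom (Matrix.SpecialLinearGroup.mapGL ℝ (rotSL θ)) z = -Real.sin θ * z + Real.cos θ := by
  have h10 : Matrix.SpecialLinearGroup.mapGL ℝ (rotSL θ) 1 0 = -Real.sin θ := rfl
  have h11 : Matrix.SpecialLinearGroup.mapGL ℝ (rotSL θ) 1 1 = Real.cos θ := rfl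
  rw [denom, h10, h11, Complex.ofReal_neg]

theorem coe_rotSL_smul (θ : ℝ) (z : ℍ) :
    ((rotSL θ • z : ℍ) : ℂ) = (Real.cos θ * z + Real.sin θ) / (-Real.sin θ * z + Real.cos θ) := by
  rw [coe_specialLinearGroup_apply]
  simp [rotSL]

theorem coe_rotSL_smul_sub (θ : ℝ) (z : ℍ) :
    ((rotSL θ • z : ℍ) : ℂ) - z =
      Real.sin θ * (1 + (z : ℂ) ^ 2) / (-Real.sin θ * z + Real.cos θ) := by
  rw [coe_rotSL_smul, div_sub' (denom_mapGL_rotSL θ z ▸ denom_ne_zero _ z)]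
  ring

theorem im_rotSL_smul (θ : ℝ) (z : ℍ) :
    (rotSL θ • z).im = z.im / Complex.normSq (-Real.sin θ * z + Real.cos θ) := by
  rw [MulAction.compHom_smul_def, im_smul_eq_div_normSq, denom_mapGL_rotSL]
  simp

theorem sinh_dist_I (z : ℍ) : Real.sinh (dist z I) = ‖1 + (z : ℂ) ^ 2‖ / (2 * z.im) := by
  have hz := z.im_pos
  refine (pow_left_inj₀ (Real.sinh_nonneg_iff.2 dist_nonneg) (by positivity) two_ne_zero).1 ?_
  rw [Real.sinh_sq, cosh_dist, div_pow, Complex.sq_norm, Complex.dist_eq, Complex.sq_norm]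
  have hre : (z : ℂ).re = z.re := rfl
  have him : (z : ℂ).im = z.im := rfl
  simp only [Complex.normSq_apply, coe_I, Complex.sub_re, Complex.sub_im, Complex.add_re,
    Complex.add_im, Complex.I_re, Complex.I_im, Complex.one_re, Complex.one_im, pow_two,
    Complex.mul_re, Complex.mul_im, hre, him, I_im]
  field_simp
  ring

theorem sinh_half_dist_rotSL_smul (θ : ℝ) (z : ℍ) :
    Real.sinh (dist (rotSL θ • z) z / 2) = |Real.sin θ| * Real.sinh (dist z I) := by
  have hd : 0 < ‖-(Real.sin θ : ℂ) * z + Real.cos θ‖ :=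
    norm_pos_iff.2 (denom_mapGL_rotSL θ z ▸ denom_ne_zero _ z)
  have him : (rotSL θ • z).im * z.im = (z.im / ‖-(Real.sin θ : ℂ) * z + Real.cos θ‖) ^ 2 := by
    rw [im_rotSL_smul, ← Complex.sq_norm]
    ring
  rw [sinh_dist_I, ← mul_div_assoc, sinh_half_dist, dist_eq_norm, coe_rotSL_smul_sub, him,
    Real.sqrt_sq (by positivity), norm_div, norm_mul, Complex.norm_real, Real.norm_eq_abs]
  generalize ‖-(Real.sin θ : ℂ) * z + Real.cos θ‖ = d at hd ⊢
  field_simp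

theorem dist_ptI_I {t : ℝ} (ht : 0 ≤ t) : dist (ptI t) I = 2 * t := by
  rw [dist_of_re_eq (z := ptI t) (w := I) rfl]
  simp [ptI, abs_of_nonneg ht]

end UpperHalfPlane

theorem sin_sq_le_of_dist_rot_le_general (t r θ : ℝ) (ht : 0 < t)
    (h : dist (rotSL θ • ptI t) (ptI t) ≤ r) :
    Real.sin θ ^ 2 ≤ Real.sinh (r / 2) ^ 2 / Real.sinh (2 * t) ^ 2 := by
  have hsinh : 0 < Real.sinh (2 * t) := Real.sinh_pos_iff.2 (by positivity)
  have hle : |Real.sin θ| * Real.sinh (2 * t) ≤ Real.sinh (r / 2) := by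
    rw [← dist_ptI_I ht.le, ← sinh_half_dist_rotSL_smul]
    exact Real.sinh_le_sinh.2 (by linarith)
  rw [le_div_iff₀ (by positivity), ← sq_abs (Real.sin θ), ← mul_pow]
  exact pow_le_pow_left₀ (by positivity) hle 2

/-- Angle bound from the hyperbolic law of cosines: if
`dist (k_θ · e^{−2t} i, e^{−2t} i) ≤ r` then `sin² θ ≤ sinh²(r/2) / sinh²(2t)`. -/
theorem sin_sq_le_of_dist_rot_le (t r θ : ℝ) (ht : 0 < t) (hr : 0 < r)
    (h : dist (rotSL θ • ptI t) (ptI t) ≤ r) :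
    Real.sin θ ^ 2 ≤ Real.sinh (r / 2) ^ 2 / Real.sinh (2 * t) ^ 2 :=
  sin_sq_le_of_dist_rot_le_general t r θ ht h
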